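/- arXiv:2301.05171 — 3 statements merged into one kernel-verified Lean document; each statement's English description precedes it below -/
import Mathlib

section
/- If an oval in a projective plane of order q contains exactly q + 2 points, then q is even. Equivalently, an oval in a projective plane of odd order q contains at most q + 1 points. -/
open Configuration

/-- If an oval in a projective plane of order q contains exactly q + 2 points,
then q is even; equivalently an oval in a plane of odd order has at most q + 1 points. -/
theorem oval_card_eq_q_add_two_even (P L : Type*) [Membership P L] [ProjectivePlane P L]
    [Finite P] [Finite L] (O : Set P)
    (hO : ∀ l : L, {p ∈ O | p ∈ l}.ncard ≤ 2)
    (hcard : O.ncard = ProjectivePlane.order P L + 2) :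
    Even (ProjectivePlane.order P L) := by
  classical
  have _ : Fintype P := Fintype.ofFinite P
  have _ : Fintype L := Fintype.ofFinite L
  set q := ProjectivePlane.order P L with hq
  -- the oval as a Finset
  have hOcard : O.toFinset.card = q + 2 := by
    rw [← Set.ncard_eq_toFinset_card' O, hcard]
  -- hO in Finset form
  have hOfin : ∀ l : L, (O.toFinset.filter (· ∈ l)).card ≤ 2 := by
    intro l
    have h1 : {p ∈ O | p ∈ l} = ↑(O.toFinset.filter (· ∈ l)) := by
      ext p; simp [Set.mem_setOf_eq]
    have := hO l
    rwa [h1, Set.ncard_coe_finset] at this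
  -- Step 1: every line through a point of the oval contains a second oval point
  have step1 : ∀ (l : L) (p : P), p ∈ O → p ∈ l → ∃ r, r ∈ O ∧ r ∈ l ∧ r ≠ p := by
    intro l p hpO hpl
    set f : P → L := fun r => if h : r ≠ p then HasLines.mkLine h else l with hf
    set s : Finset P := O.toFinset.erase p with hs
    set t : Finset L := Finset.univ.filter (fun m : L => p ∈ m) with ht
    have hscard : s.card = q + 1 := by
      rw [hs, Finset.card_erase_of_mem (Set.mem_toFinset.mpr hpO), hOcard]
      omega
    have htcard : t.card = q + 1 := by
      have h1 : t.card = Fintype.card {m : L // p ∈ m} := (Fintype.card_subtype _).symm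
      have h2 : Configuration.lineCount L p = q + 1 :=
        Configuration.ProjectivePlane.lineCount_eq L p
      rw [h1, ← Nat.card_eq_fintype_card]
      exact h2
    -- f maps s into t
    have hmaps : ∀ r ∈ s, f r ∈ t := by
      intro r hr
      have hrp : r ≠ p := Finset.ne_of_mem_erase hr
      simp only [hf, dif_pos hrp, ht, Finset.mem_filter, Finset.mem_univ, true_and]
      exact (HasLines.mkLine_ax hrp).2
    -- f is injective on s
    have hinj : Set.InjOn f s := by
      intro r hr r' hr' hff
      by_contra hne
      have hrs : r ∈ s := hr
      have hr's : r' ∈ s := hr'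
      have hrp : r ≠ p := Finset.ne_of_mem_erase hrs
      have hr'p : r' ≠ p := Finset.ne_of_mem_erase hr's
      have hrO : r ∈ O := Set.mem_toFinset.mp (Finset.mem_of_mem_erase hrs)
      have hr'O : r' ∈ O := Set.mem_toFinset.mp (Finset.mem_of_mem_erase hr's)
      have hrm : r ∈ f r := by
        simp only [hf, dif_pos hrp]
        exact (HasLines.mkLine_ax hrp).1
      have hpm : p ∈ f r := by
        simp only [hf, dif_pos hrp]
        exact (HasLines.mkLine_ax hrp).2
      have hr'm : r' ∈ f r := by
        rw [hff]
        simp only [hf, dif_pos hr'p]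
        exact (HasLines.mkLine_ax hr'p).1
      -- three distinct points of O on f r
      have hsub : ({r, r', p} : Set P) ⊆ {a ∈ O | a ∈ f r} := by
        intro a ha
        rcases ha with rfl | rfl | rfl
        · exact ⟨hrO, hrm⟩
        · exact ⟨hr'O, hr'm⟩
        · exact ⟨hpO, hpm⟩
      have h3 : ({r, r', p} : Set P).ncard = 3 := by
        rw [Set.ncard_insert_of_notMem (by simp [hne, hrp]) (Set.toFinite _),
          Set.ncard_pair hr'p]
      have hle : ({r, r', p} : Set P).ncard ≤ {a ∈ O | a ∈ f r}.ncard :=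
        Set.ncard_le_ncard hsub (Set.toFinite _)
      have := hO (f r)
      omega
    -- hence f maps s onto t
    have himage : s.image f = t := by
      apply Finset.eq_of_subset_of_card_le
      · intro m hm
        obtain ⟨r, hr, rfl⟩ := Finset.mem_image.mp hm
        exact hmaps r hr
      · rw [Finset.card_image_of_injOn hinj, hscard, htcard]
    have hlt : l ∈ t := by
      simp only [ht, Finset.mem_filter, Finset.mem_univ, true_and]
      exact hpl
    rw [← himage] at hlt
    obtain ⟨r, hr, hfr⟩ := Finset.mem_image.mp hlt
    have hrp : r ≠ p := Finset.ne_of_mem_erase hr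
    have hrO : r ∈ O := Set.mem_toFinset.mp (Finset.mem_of_mem_erase hr)
    have hrl : r ∈ l := by
      rw [← hfr]
      simp only [hf, dif_pos hrp]
      exact (HasLines.mkLine_ax hrp).1
    exact ⟨r, hrO, hrl, hrp⟩
  -- Step 2: every line meets O in 0 or 2 points
  have step2 : ∀ l : L, (O.toFinset.filter (· ∈ l)).card = 0 ∨
      (O.toFinset.filter (· ∈ l)).card = 2 := by
    intro l
    rcases Finset.eq_empty_or_nonempty (O.toFinset.filter (· ∈ l)) with h | ⟨p, hp⟩
    · left; rw [h]; rfl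
    · right
      simp only [Finset.mem_filter, Set.mem_toFinset] at hp
      obtain ⟨r, hrO, hrl, hrp⟩ := step1 l p hp.1 hp.2
      have h2 : 1 < (O.toFinset.filter (· ∈ l)).card :=
        Finset.one_lt_card.mpr ⟨p, by simp [hp.1, hp.2], r, by simp [hrO, hrl], fun h => hrp h.symm⟩
      have := hOfin l
      omega
  -- there exists a point off the oval
  have h2q : 2 ≤ q := Configuration.ProjectivePlane.one_lt_order P L
  obtain ⟨x, hxO⟩ : ∃ x : P, x ∉ O := by
    by_contra h
    push_neg at h
    have : O = Set.univ := Set.eq_univ_of_forall h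
    have hcardP : Fintype.card P = q ^ 2 + q + 1 :=
      Configuration.ProjectivePlane.card_points P L
    have : O.ncard = q ^ 2 + q + 1 := by
      rw [this, Set.ncard_univ, Nat.card_eq_fintype_card, hcardP]
    rw [hcard] at this
    nlinarith
  -- lines through x partition O into pairs
  have hL : Nonempty L := by
    obtain ⟨p₁, hp₁O, hp₁l⟩ : ∃ p₁ : P, p₁ ∈ O ∧ True := by
      obtain ⟨y, hy⟩ : O.Nonempty := by
        rw [← Set.ncard_pos (Set.toFinite O), hcard]; omega
      exact ⟨y, hy, trivial⟩
    have hne : p₁ ≠ x := fun h => hxO (h ▸ hp₁O)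
    exact ⟨HasLines.mkLine hne⟩
  set g : P → L := fun p => if h : x ≠ p then HasLines.mkLine h else Classical.arbitrary L
    with hg
  have hfib : O.toFinset.card = ∑ l : L, (O.toFinset.filter (fun p => g p = l)).card :=
    Finset.card_eq_sum_card_fiberwise (fun p _ => Finset.mem_univ (g p))
  have heven : Even (O.toFinset.card) := by
    rw [hfib]
    apply Finset.even_sum
    intro l _
    by_cases hxl : x ∈ l
    · -- the fiber over l is exactly O ∩ l
      have hfilter : O.toFinset.filter (fun p => g p = l) = O.toFinset.filter (· ∈ l) := by
        ext p
        simp only [Finset.mem_filter, Set.mem_toFinset, and_congr_right_iff]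
        intro hpO
        have hxp : x ≠ p := fun h => hxO (h ▸ hpO)
        constructor
        · intro hgl
          rw [hg] at hgl
          simp only [dif_pos hxp] at hgl
          rw [← hgl]
          exact (HasLines.mkLine_ax hxp).2
        · intro hpl
          simp only [hg, dif_pos hxp]
          rcases Configuration.Nondegenerate.eq_or_eq (HasLines.mkLine_ax hxp).1
            (HasLines.mkLine_ax hxp).2 hxl hpl with h | h
          · exact absurd h hxp
          · exact h
      rw [hfilter]
      rcases step2 l with h | h <;> rw [h] <;> decide
    · -- the fiber over l is empty
      have hfilter : O.toFinset.filter (fun p => g p = l) = ∅ := by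
        rw [Finset.eq_empty_iff_forall_notMem]
        intro p hp
        simp only [Finset.mem_filter, Set.mem_toFinset] at hp
        obtain ⟨hpO, hgl⟩ := hp
        have hxp : x ≠ p := fun h => hxO (h ▸ hpO)
        rw [hg] at hgl
        simp only [dif_pos hxp] at hgl
        exact hxl (hgl ▸ (HasLines.mkLine_ax hxp).1)
      rw [hfilter]
      exact Even.zero
  rw [hOcard] at heven
  obtain ⟨r, hr⟩ := heven
  exact ⟨r - 1, by omega⟩
end

section
/- Desargues' theorem in coordinates: let P = {p1, p2, p3} and S = {s1, s2, s3} be two triangles in PG(2, k) in perspective from a point c (i.e., for each i, the points pi, si, c are collinear, and c, pi, si pairwise distinct). Then the three intersection points x12, x13, x23, where xij is the intersection of the line through pi, pj with the line through si, sj, are collinear. -/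
open Module Submodule

section Aux

variable {k : Type*} [Field k]

private lemma rank1 (V : Submodule k (Fin 3 → k)) (h : finrank k V = 1) :
    ∃ v : Fin 3 → k, v ≠ 0 ∧ V = span k {v} := by
  obtain ⟨v, hvV, hv0'⟩ := exists_mem_ne_zero_of_rank_pos
    (s := V) (by rw [← Module.finrank_eq_rank', h]; norm_num)
  refine ⟨v, hv0', (Submodule.eq_of_le_of_finrank_le
    ((span_singleton_le_iff_mem _ _).2 hvV) ?_).symm⟩
  rw [h, finrank_span_singleton hv0']

private lemma ext_one (S : Submodule k (Fin 3 → k)) (h : finrank k S < 3) :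
    ∃ T : Submodule k (Fin 3 → k), S ≤ T ∧ finrank k T = finrank k S + 1 := by
  obtain ⟨m, hm⟩ := S.exists_of_finrank_lt
    (by rw [show finrank k (Fin 3 → k) = 3 by simp]; exact h)
  have hm0 : m ≠ 0 := fun h0 => hm 1 one_ne_zero (by simp [h0])
  refine ⟨S ⊔ span k {m}, le_sup_left, ?_⟩
  have hinf : S ⊓ span k {m} = ⊥ := by
    rw [eq_bot_iff]
    intro x hx
    rw [Submodule.mem_inf] at hx
    obtain ⟨r, rfl⟩ := mem_span_singleton.1 hx.2
    rcases eq_or_ne r 0 with rfl | hr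
    · simp
    · exact absurd hx.1 (hm r hr)
  have hsum := Submodule.finrank_sup_add_finrank_inf_eq S (span k {m})
  rw [hinf, finrank_bot, finrank_span_singleton hm0] at hsum
  omega

private lemma ext_two (S : Submodule k (Fin 3 → k)) (h : finrank k S ≤ 2) :
    ∃ W : Submodule k (Fin 3 → k), finrank k W = 2 ∧ S ≤ W := by
  rcases eq_or_lt_of_le h with heq | hlt
  · exact ⟨S, heq, le_rfl⟩
  · obtain ⟨T, hST, hT⟩ := ext_one S (by omega)
    rcases eq_or_lt_of_le (show finrank k T ≤ 2 by omega) with heq | hlt2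
    · exact ⟨T, heq, hST⟩
    · obtain ⟨U, hTU, hU⟩ := ext_one T (by omega)
      exact ⟨U, by omega, hST.trans hTU⟩

private lemma tri_indep (a : Fin 3 → (Fin 3 → k))
    (htri : ¬ ∃ W : Submodule k (Fin 3 → k), finrank k W = 2 ∧ ∀ i, span k {a i} ≤ W) :
    LinearIndependent k a := by
  rw [linearIndependent_iff_card_eq_finrank_span]
  by_contra h
  have hle3 : finrank k (span k (Set.range a)) ≤ 3 := by
    have := Submodule.finrank_le (span k (Set.range a))
    simpa using this
  simp only [Fintype.card_fin, Set.finrank] at h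
  have hle : finrank k (span k (Set.range a)) ≤ 2 := by omega
  obtain ⟨W, hW2, hSW⟩ := ext_two _ hle
  exact htri ⟨W, hW2, fun i => le_trans
    ((span_singleton_le_iff_mem _ _).2 (subset_span (Set.mem_range_self i))) hSW⟩

private lemma pair_indep {a : Fin 3 → (Fin 3 → k)} (ha : LinearIndependent k a)
    {i j : Fin 3} (hij : i ≠ j) : LinearIndependent k ![a i, a j] := by
  have hinj : Function.Injective ![i, j] := by
    intro x y hxy
    fin_cases x <;> fin_cases y <;> simp_all
  have h := ha.comp ![i, j] hinj
  have : ![a i, a j] = a ∘ ![i, j] := by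
    funext m; fin_cases m <;> rfl
  rwa [this]

private lemma sup_rank {a : Fin 3 → (Fin 3 → k)} (ha : LinearIndependent k a)
    {i j : Fin 3} (hij : i ≠ j) : finrank k ↥(span k {a i} ⊔ span k {a j}) = 2 := by
  have hpair := pair_indep ha hij
  have hspan : span k {a i} ⊔ span k {a j} = span k (Set.range ![a i, a j]) := by
    rw [Matrix.range_cons_cons_empty, ← Submodule.span_union, Set.singleton_union]
  rw [hspan, finrank_span_eq_card hpair, Fintype.card_fin]

private lemma line_inf {L1 L2 : Submodule k (Fin 3 → k)} (h1 : finrank k ↥L1 = 2)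
    (h2 : finrank k ↥L2 = 2) (hne : L1 ≠ L2) {x : Fin 3 → k} (hx : x ≠ 0)
    (hx1 : x ∈ L1) (hx2 : x ∈ L2) : L1 ⊓ L2 = span k {x} := by
  have hs : span k {x} ≤ L1 ⊓ L2 :=
    le_inf ((span_singleton_le_iff_mem _ _).2 hx1) ((span_singleton_le_iff_mem _ _).2 hx2)
  have hlt : L1 < L1 ⊔ L2 := by
    refine lt_of_le_of_ne le_sup_left (fun h => hne ?_)
    have hle : L2 ≤ L1 := by rw [h]; exact le_sup_right
    exact (Submodule.eq_of_le_of_finrank_le hle (by omega)).symm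
  have h3 : finrank k ↥L1 < finrank k ↥(L1 ⊔ L2) := Submodule.finrank_lt_finrank_of_lt hlt
  have hsup3 : finrank k ↥(L1 ⊔ L2) ≤ 3 := by
    have := Submodule.finrank_le (L1 ⊔ L2)
    simpa using this
  have hsum := Submodule.finrank_sup_add_finrank_inf_eq L1 L2
  have hinf : finrank k (L1 ⊓ L2 : Submodule k (Fin 3 → k)) ≤ 1 := by omega
  refine (Submodule.eq_of_le_of_finrank_le hs ?_).symm
  rw [finrank_span_singleton hx]
  exact hinf

end Aux

/-- Desargues' theorem: two triangles in PG(2, k) in perspective from a point c are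
in perspective from a line: the three intersection points of corresponding sides
are collinear. -/
theorem desargues (k : Type*) [Field k]
    (p s : Fin 3 → Submodule k (Fin 3 → k)) (c : Submodule k (Fin 3 → k))
    (hp1 : ∀ i, Module.finrank k (p i) = 1)
    (hs1 : ∀ i, Module.finrank k (s i) = 1)
    (hc1 : Module.finrank k c = 1)
    -- p and s are triangles:
    (hptri : ¬ ∃ W : Submodule k (Fin 3 → k), Module.finrank k W = 2 ∧ ∀ i, p i ≤ W)
    (hstri : ¬ ∃ W : Submodule k (Fin 3 → k), Module.finrank k W = 2 ∧ ∀ i, s i ≤ W)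
    -- c, p i, s i pairwise distinct:
    (hdist : ∀ i, c ≠ p i ∧ c ≠ s i ∧ p i ≠ s i)
    -- perspective from the point c: c, p i, s i are collinear:
    (hpersp : ∀ i, c ≤ p i ⊔ s i)
    -- corresponding sides are distinct lines:
    (hsides : ∀ i j, i ≠ j → p i ⊔ p j ≠ s i ⊔ s j) :
    -- the intersection points of corresponding sides are collinear:
    ∃ W : Submodule k (Fin 3 → k), Module.finrank k W = 2 ∧
      ∀ i j, i ≠ j → (p i ⊔ p j) ⊓ (s i ⊔ s j) ≤ W := by
  obtain ⟨e, he0, rfl⟩ := rank1 c hc1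
  choose u hu0 hu using fun i => rank1 (p i) (hp1 i)
  choose v hv0 hv using fun i => rank1 (s i) (hs1 i)
  -- normalize: find a i, b i spanning p i, s i with a i + b i = e
  have key : ∀ i, ∃ ab : (Fin 3 → k) × (Fin 3 → k),
      p i = span k {ab.1} ∧ s i = span k {ab.2} ∧ ab.1 + ab.2 = e := by
    intro i
    have he : e ∈ p i ⊔ s i := hpersp i (mem_span_singleton_self e)
    rw [hu i, hv i] at he
    rw [show span k {u i} ⊔ span k {v i} = span k {u i, v i} by
      rw [← Submodule.span_union, Set.singleton_union]] at he
    obtain ⟨α, β, hab⟩ := mem_span_pair.1 he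
    have hα : α ≠ 0 := by
      rintro rfl
      have : e ∈ s i := by
        rw [hv i]
        exact mem_span_singleton.2 ⟨β, by rw [← hab]; simp⟩
      have hle : span k {e} ≤ s i := (span_singleton_le_iff_mem _ _).2 this
      exact (hdist i).2.1 (Submodule.eq_of_le_of_finrank_le hle (by rw [hs1 i, hc1]))
    have hβ : β ≠ 0 := by
      rintro rfl
      have : e ∈ p i := by
        rw [hu i]
        exact mem_span_singleton.2 ⟨α, by rw [← hab]; simp⟩
      have hle : span k {e} ≤ p i := (span_singleton_le_iff_mem _ _).2 this
      exact (hdist i).1 (Submodule.eq_of_le_of_finrank_le hle (by rw [hp1 i, hc1]))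
    refine ⟨(α • u i, β • v i), ?_, ?_, hab⟩
    · rw [hu i, span_singleton_smul_eq (IsUnit.mk0 α hα)]
    · rw [hv i, span_singleton_smul_eq (IsUnit.mk0 β hβ)]
  choose ab hpa hsb habe using key
  set a : Fin 3 → (Fin 3 → k) := fun i => (ab i).1 with ha_def
  set b : Fin 3 → (Fin 3 → k) := fun i => (ab i).2 with hb_def
  -- linear independence of the triangles
  have hlina : LinearIndependent k a := by
    apply tri_indep
    intro ⟨W, hW2, hW⟩
    exact hptri ⟨W, hW2, fun i => by rw [hpa i]; exact hW i⟩
  have hlinb : LinearIndependent k b := by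
    apply tri_indep
    intro ⟨W, hW2, hW⟩
    exact hstri ⟨W, hW2, fun i => by rw [hsb i]; exact hW i⟩
  -- the axis of perspectivity
  refine ⟨span k {a 0 - a 1, a 1 - a 2}, ?_, ?_⟩
  · -- it has rank 2
    have hpair : LinearIndependent k ![a 0 - a 1, a 1 - a 2] := by
      rw [LinearIndependent.pair_iff]
      intro t₁ t₂ h
      have hsum : t₁ • a 0 + (t₂ - t₁) • a 1 + (-t₂) • a 2 = 0 := by
        rw [← h]; rw [smul_sub, smul_sub]; module
      have := Fintype.linearIndependent_iff.1 hlina ![t₁, t₂ - t₁, -t₂]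
        (by rw [Fin.sum_univ_three]; simpa using hsum)
      have h0 := this 0
      have h2 := this 2
      simp only [Matrix.cons_val_zero, Matrix.cons_val_two, Matrix.tail_cons,
        Matrix.cons_val_one, Matrix.head_cons, neg_eq_zero] at h0 h2
      exact ⟨h0, h2⟩
    have hspan : span k {a 0 - a 1, a 1 - a 2}
        = span k (Set.range ![a 0 - a 1, a 1 - a 2]) := by
      rw [Matrix.range_cons_cons_empty]
    rw [hspan, finrank_span_eq_card hpair, Fintype.card_fin]
  · -- all intersection points lie on it
    set W := span k {a 0 - a 1, a 1 - a 2} with hW_def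
    have hxW : ∀ i j : Fin 3, a i - a j ∈ W := by
      have hx : a 0 - a 1 ∈ W := subset_span (Set.mem_insert _ _)
      have hy : a 1 - a 2 ∈ W := subset_span (Set.mem_insert_of_mem _ rfl)
      intro i j
      fin_cases i <;> fin_cases j
      · simpa using W.zero_mem
      · exact hx
      · simpa using add_mem hx hy
      · simpa [neg_sub] using neg_mem hx
      · simpa using W.zero_mem
      · exact hy
      · simpa using neg_mem (add_mem hx hy)
      · simpa [neg_sub] using neg_mem hy
      · simpa using W.zero_mem
    intro i j hij
    -- the intersection point is spanned by a i - a j = b j - b i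
    have hab : a i - a j = b j - b i := by
      have h1 : a i + b i = e := habe i
      have h2 : a j + b j = e := habe j
      have : a i + b i = a j + b j := by rw [h1, h2]
      linear_combination (norm := module) this
    have hne : a i ≠ a j := fun h => hij (hlina.injective h)
    have hx0 : a i - a j ≠ 0 := sub_ne_zero_of_ne hne
    have hx1 : a i - a j ∈ p i ⊔ p j := by
      apply sub_mem
      · exact Submodule.mem_sup_left (by rw [hpa i]; exact mem_span_singleton_self _)
      · exact Submodule.mem_sup_right (by rw [hpa j]; exact mem_span_singleton_self _)
    have hx2 : a i - a j ∈ s i ⊔ s j := by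
      rw [hab]
      apply sub_mem
      · exact Submodule.mem_sup_right (by rw [hsb j]; exact mem_span_singleton_self _)
      · exact Submodule.mem_sup_left (by rw [hsb i]; exact mem_span_singleton_self _)
    have hr1 : finrank k (p i ⊔ p j : Submodule k (Fin 3 → k)) = 2 := by
      rw [hpa i, hpa j]; exact sup_rank hlina hij
    have hr2 : finrank k (s i ⊔ s j : Submodule k (Fin 3 → k)) = 2 := by
      rw [hsb i, hsb j]; exact sup_rank hlinb hij
    rw [line_inf hr1 hr2 (hsides i j hij) hx0 hx1 hx2]
    exact (span_singleton_le_iff_mem _ _).2 (hxW i j)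
end

section
/- Segre's Lemma of the Tangents (coordinate form): let q be an odd prime power and let O be an oval of q + 1 points in PG(2, F_q) containing the points p1 = [1:0:0], p2 = [0:1:0], p3 = [0:0:1]. Let the tangent to O at p1 be the line x2 = k1·x3, the tangent at p2 be x3 = k2·x1, and the tangent at p3 be x1 = k3·x2, with k1, k2, k3 ∈ F_q nonzero. Then k1·k2·k3 = -1. -/
/-!
A point of `O` off the triangle `p₁p₂p₃` has all coordinates nonzero, since otherwise it would
lie on a side of the triangle together with two of the `pᵢ`. Through `pᵢ` pass `q + 1` lines:
the two sides, the tangent, and `q - 2` secants, each meeting `O` in exactly one of the `q - 2`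
remaining points. So the secant slopes at `pᵢ` run through `F_q^* \ {kᵢ}`, and by Wilson's
theorem in `F_q^*` their product is `-kᵢ⁻¹`. Multiplying the three products point by point gives
`∏ λ₁λ₂λ₃ = 1`, hence `(-1)³ (k₁k₂k₃)⁻¹ = 1`.
-/

open Module Submodule Finset

-- `Set.ncard` of an infinite set is `0`, so this only has its intended meaning for finite `O`.
def IsArc {K V : Type*} [Field K] [AddCommGroup V] [Module K V] (O : Set (Submodule K V)) :
    Prop :=
  ∀ W : Submodule K V, finrank K W = 2 → {S ∈ O | S ≤ W}.ncard ≤ 2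

section LinearAlgebra

variable {K V : Type*} [Field K] [AddCommGroup V] [Module K V]

theorem finrank_span_pair {u v : V} (h : LinearIndependent K ![u, v]) :
    finrank K (span K {u, v}) = 2 := by
  have := finrank_span_eq_card h
  rwa [Matrix.range_cons, Matrix.range_cons, Matrix.range_empty, Set.union_empty,
    Set.singleton_union, Fintype.card_fin] at this

theorem span_singleton_ne_of_linearIndependent {u v : V} (h : LinearIndependent K ![u, v]) :
    K ∙ u ≠ K ∙ v := by
  intro huv
  obtain ⟨a, ha⟩ := mem_span_singleton.mp (huv ▸ mem_span_singleton_self v)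
  exact (LinearIndependent.pair_iff' (h.ne_zero 0)).mp h a ha

theorem exists_eq_span_singleton_of_finrank_eq_one {S : Submodule K V} [FiniteDimensional K S]
    (hS : finrank K S = 1) : ∃ v, S = K ∙ v := by
  obtain ⟨v, hv⟩ := (S.finrank_le_one_iff_isPrincipal).mp hS.le
  exact ⟨v, hv⟩

theorem IsArc.eq_or_eq_of_mem_span_pair {O : Set (Submodule K V)} (hO : IsArc O)
    (hfin : O.Finite) {u v w : V} (hu : K ∙ u ∈ O) (hv : K ∙ v ∈ O) (hw : K ∙ w ∈ O)
    (huv : LinearIndependent K ![u, v]) (hwuv : w ∈ span K {u, v}) :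
    K ∙ w = K ∙ u ∨ K ∙ w = K ∙ v := by
  by_contra! hne
  have hsub : ({K ∙ u, K ∙ v, K ∙ w} : Set (Submodule K V)) ⊆ {S ∈ O | S ≤ span K {u, v}} := by
    have hle : ∀ x ∈ ({u, v} : Set V), K ∙ x ≤ span K {u, v} := fun x hx =>
      span_mono (Set.singleton_subset_iff.mpr hx)
    rintro S (rfl | rfl | rfl)
    exacts [⟨hu, hle u (by simp)⟩, ⟨hv, hle v (by simp)⟩,
      ⟨hw, (span_singleton_le_iff_mem w _).mpr hwuv⟩]
  have hthree : ({K ∙ u, K ∙ v, K ∙ w} : Set (Submodule K V)).ncard = 3 := by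
    rw [Set.ncard_insert_of_notMem (by simp [span_singleton_ne_of_linearIndependent huv,
      hne.1.symm]), Set.ncard_pair hne.2.symm]
  have := (Set.ncard_le_ncard hsub (hfin.subset (Set.sep_subset _ _))).trans
    (hO _ (finrank_span_pair huv))
  omega

end LinearAlgebra

section Coordinates

variable {K ι : Type*} [Field K] [DecidableEq ι]

theorem apply_eq_zero_of_span_eq_span_single {i j : ι} (hij : i ≠ j) {v : ι → K}
    (h : K ∙ v = K ∙ Pi.single i 1) : v j = 0 := by
  obtain ⟨a, rfl⟩ := mem_span_singleton.mp (h ▸ mem_span_singleton_self v)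
  simp [hij.symm]

theorem linearIndependent_single_pair {i j : ι} (hij : i ≠ j) {v : ι → K} (hv : v j ≠ 0) :
    LinearIndependent K ![Pi.single i 1, v] := by
  refine (LinearIndependent.pair_iff' (by simp)).mpr fun a ha => hv ?_
  simp [← ha, hij.symm]

theorem span_single_injective :
    Function.Injective fun i : ι => K ∙ (Pi.single i 1 : ι → K) := by
  intro i j hij
  by_contra hne
  simpa using apply_eq_zero_of_span_eq_span_single hne hij.symm

end Coordinates

theorem Fin.three_eq_or_eq_or_eq {i j k : Fin 3} (hij : i ≠ j) (hik : i ≠ k) (hjk : j ≠ k)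
    (l : Fin 3) : l = i ∨ l = j ∨ l = k := by
  revert i j k l; decide

theorem FiniteField.prod_erase_zero_eq_neg_one {K : Type*} [Field K] [Fintype K]
    [DecidableEq K] : ∏ x ∈ univ.erase (0 : K), x = -1 := by
  have h := congrArg Units.val (FiniteField.prod_univ_units_id_eq_neg_one (K := K))
  rw [Units.coe_prod, Units.val_neg, Units.val_one] at h
  rw [← h]
  exact prod_bij' (fun x hx => Units.mk0 x (ne_of_mem_erase hx)) (fun u _ => (u : K))
    (by simp) (by simp) (by simp) (by simp) (by simp)

theorem Finset.prod_eq_neg_inv_of_injOn {K ι : Type*} [Field K] [Fintype K] {T : Finset ι}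
    {f : ι → K} {κ : K} (hκ : κ ≠ 0) (hf0 : ∀ x ∈ T, f x ≠ 0) (hfκ : ∀ x ∈ T, f x ≠ κ)
    (hf : Set.InjOn f T) (hT : #T = Fintype.card K - 2) : ∏ x ∈ T, f x = -κ⁻¹ := by
  classical
  have himage : T.image f = (univ.erase 0).erase κ := by
    refine eq_of_subset_of_card_le (fun y hy => ?_) ?_
    · obtain ⟨x, hx, rfl⟩ := mem_image.mp hy
      exact mem_erase.mpr ⟨hfκ x hx, mem_erase.mpr ⟨hf0 x hx, mem_univ _⟩⟩
    · rw [card_image_of_injOn hf, hT, card_erase_of_mem (mem_erase.mpr ⟨hκ, mem_univ _⟩),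
        card_erase_of_mem (mem_univ _), card_univ]
      omega
  have hsplit :=
    mul_prod_erase (univ.erase (0 : K)) (fun x => x) (mem_erase.mpr ⟨hκ, mem_univ _⟩)
  rw [FiniteField.prod_erase_zero_eq_neg_one, ← himage, prod_image hf] at hsplit
  field_simp
  linear_combination hsplit

section Oval

variable {K : Type*} [Field K] [Fintype K] {O : Set (Submodule K (Fin 3 → K))}

theorem IsArc.apply_ne_zero (hO : IsArc O) (hp : ∀ i, K ∙ Pi.single i 1 ∈ O)
    {u : Fin 3 → K} (hu : K ∙ u ∈ O) (hu' : K ∙ u ∉ Set.range fun i => K ∙ Pi.single i 1)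
    (l : Fin 3) : u l ≠ 0 := by
  intro hl
  obtain ⟨j, k, hlj, hlk, hjk⟩ : ∃ j k : Fin 3, l ≠ j ∧ l ≠ k ∧ j ≠ k := by
    fin_cases l <;> decide
  have hmem : u ∈ span K {Pi.single j 1, Pi.single k 1} := by
    refine mem_span_pair.mpr ⟨u j, u k, funext fun m => ?_⟩
    rcases Fin.three_eq_or_eq_or_eq hlj hlk hjk m with rfl | rfl | rfl <;>
      simp [hl, hlj.symm, hlk.symm, hjk, hjk.symm]
  rcases hO.eq_or_eq_of_mem_span_pair O.toFinite (hp j) (hp k) hu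
      (linearIndependent_single_pair hjk (by simp)) hmem with h | h <;>
    exact hu' ⟨_, h.symm⟩

theorem IsArc.exists_reps_off_triangle (hO : IsArc O) (hOrk : ∀ S ∈ O, finrank K S = 1)
    (hOcard : O.ncard = Fintype.card K + 1) (hp : ∀ i, K ∙ Pi.single i 1 ∈ O) :
    ∃ T : Finset (Fin 3 → K), (∀ v ∈ T, K ∙ v ∈ O) ∧ (∀ v ∈ T, ∀ l, v l ≠ 0) ∧
      Set.InjOn (fun v => K ∙ v) (T : Set (Fin 3 → K)) ∧ #T = Fintype.card K - 2 := by
  classical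
  set T := univ.filter fun v : Fin 3 → K => v 0 = 1 ∧ (∀ l, v l ≠ 0) ∧ K ∙ v ∈ O
  have hmemT {v} : v ∈ T ↔ v 0 = 1 ∧ (∀ l, v l ≠ 0) ∧ K ∙ v ∈ O := by simp [T]
  have hinj : Set.InjOn (fun v => K ∙ v) (T : Set (Fin 3 → K)) := by
    intro v hv w hw (hvw : K ∙ v = K ∙ w)
    obtain ⟨a, rfl⟩ := mem_span_singleton.mp (hvw ▸ mem_span_singleton_self w)
    have ha : a * v 0 = 1 := (hmemT.mp hw).1
    rw [(hmemT.mp hv).1, mul_one] at ha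
    simp [ha]
  have himage : (fun v => K ∙ v) '' T = O \ Set.range fun i => K ∙ Pi.single i 1 := by
    ext S
    constructor
    · rintro ⟨v, hv, rfl⟩
      obtain ⟨-, hv0, hvO⟩ := hmemT.mp hv
      exact ⟨hvO, fun ⟨i, hi⟩ => hv0 (i + 1)
        (apply_eq_zero_of_span_eq_span_single (by fin_cases i <;> decide) hi.symm)⟩
    · rintro ⟨hSO, hS⟩
      obtain ⟨u, rfl⟩ := exists_eq_span_singleton_of_finrank_eq_one (hOrk _ hSO)
      have hu0 := hO.apply_ne_zero hp hSO hS
      have hspan : K ∙ ((u 0)⁻¹ • u) = K ∙ u :=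
        span_singleton_smul_eq (inv_ne_zero (hu0 0)).isUnit u
      refine ⟨(u 0)⁻¹ • u, hmemT.mpr ⟨?_, fun l => ?_, hspan ▸ hSO⟩, hspan⟩
      · simp [hu0 0]
      · simp [hu0 0, hu0 l]
  refine ⟨T, fun v hv => (hmemT.mp hv).2.2, fun v hv => (hmemT.mp hv).2.1, hinj, ?_⟩
  rw [← Set.ncard_coe_finset, ← hinj.ncard_image, himage,
    Set.ncard_sdiff (by rintro _ ⟨i, rfl⟩; exact hp i),
    Set.ncard_range_of_injective span_single_injective, hOcard, Nat.card_eq_fintype_card,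
    Fintype.card_fin]
  omega

-- `v j / v k` is the slope of the secant `x_j = (v j / v k) x_k` joining `Pi.single i 1` to `[v]`.
theorem IsArc.prod_secant_slopes_eq_neg_inv (hO : IsArc O) {T : Finset (Fin 3 → K)}
    (hTO : ∀ v ∈ T, K ∙ v ∈ O) (hT0 : ∀ v ∈ T, ∀ l, v l ≠ 0)
    (hTinj : Set.InjOn (fun v => K ∙ v) (T : Set (Fin 3 → K)))
    (hTcard : #T = Fintype.card K - 2)
    {i j k : Fin 3} (hij : i ≠ j) (hik : i ≠ k) (hjk : j ≠ k) {κ : K} (hκ : κ ≠ 0)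
    (ht : {S ∈ O | S ≤ span K {Pi.single i 1, κ • Pi.single j 1 + Pi.single k 1}} =
      {K ∙ Pi.single i 1}) :
    ∏ v ∈ T, v j / v k = -κ⁻¹ := by
  set tangent := span K {Pi.single i 1, κ • Pi.single j 1 + Pi.single k 1}
  have hp : K ∙ Pi.single i 1 ∈ O := ((Set.ext_iff.mp ht _).mpr rfl).1
  have hcoord := Fin.three_eq_or_eq_or_eq hij hik hjk
  refine prod_eq_neg_inv_of_injOn hκ (fun v hv => div_ne_zero (hT0 v hv j) (hT0 v hv k))
    (fun v hv hslope => ?_) (fun v hv w hw hvw => ?_) hTcard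
  · have hv_tangent : v ∈ tangent := by
      refine mem_span_pair.mpr ⟨v i, v k, funext fun l => ?_⟩
      have hvj : v j = κ * v k := (div_eq_iff (hT0 v hv k)).mp hslope
      rcases hcoord l with rfl | rfl | rfl
      · simp [hij.symm, hik.symm]
      · simp [hij, hjk, hvj, mul_comm]
      · simp [hik, hjk.symm]
    have hmem : K ∙ v ∈ {S ∈ O | S ≤ tangent} :=
      ⟨hTO v hv, (span_singleton_le_iff_mem v _).mpr hv_tangent⟩
    rw [ht] at hmem
    exact hT0 v hv j (apply_eq_zero_of_span_eq_span_single hij hmem)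
  · have hw_secant : w ∈ span K {Pi.single i 1, v} := by
      refine mem_span_pair.mpr ⟨w i - w k / v k * v i, w k / v k, funext fun l => ?_⟩
      have hwj : w j = v j / v k * w k := (div_eq_iff (hT0 w hw k)).mp hvw.symm
      rcases hcoord l with rfl | rfl | rfl
      · simp
      · simp [hij, hwj]
        ring
      · simp [hik, hT0 v hv l]
    rcases hO.eq_or_eq_of_mem_span_pair O.toFinite hp (hTO v hv) (hTO w hw)
        (linearIndependent_single_pair hij (hT0 v hv j)) hw_secant with h | h
    · exact absurd (apply_eq_zero_of_span_eq_span_single hij h) (hT0 w hw j)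
    · exact hTinj hv hw h.symm

end Oval

theorem segre_lemma_of_tangents_general (K : Type*) [Field K] [Fintype K]
    (O : Set (Submodule K (Fin 3 → K)))
    (hOrk : ∀ S ∈ O, Module.finrank K S = 1)
    (hOcard : O.ncard = Fintype.card K + 1)
    (hOoval : ∀ W : Submodule K (Fin 3 → K), Module.finrank K W = 2 →
      {S ∈ O | S ≤ W}.ncard ≤ 2)
    (hp1 : Submodule.span K {![1, 0, 0]} ∈ O)
    (hp2 : Submodule.span K {![0, 1, 0]} ∈ O)
    (hp3 : Submodule.span K {![0, 0, 1]} ∈ O)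
    (k1 k2 k3 : K) (hk1 : k1 ≠ 0) (hk2 : k2 ≠ 0) (hk3 : k3 ≠ 0)
    -- the line x2 = k1·x3 is tangent to O at p1:
    (ht1 : {S ∈ O | S ≤ Submodule.span K {![1, 0, 0], ![0, k1, 1]}} =
      {Submodule.span K {![1, 0, 0]}})
    -- the line x3 = k2·x1 is tangent to O at p2:
    (ht2 : {S ∈ O | S ≤ Submodule.span K {![0, 1, 0], ![1, 0, k2]}} =
      {Submodule.span K {![0, 1, 0]}})
    -- the line x1 = k3·x2 is tangent to O at p3:
    (ht3 : {S ∈ O | S ≤ Submodule.span K {![0, 0, 1], ![k3, 1, 0]}} =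
      {Submodule.span K {![0, 0, 1]}}) :
    k1 * k2 * k3 = -1 := by
  have e0 : (![1, 0, 0] : Fin 3 → K) = Pi.single 0 1 := by ext l; fin_cases l <;> rfl
  have e1 : (![0, 1, 0] : Fin 3 → K) = Pi.single 1 1 := by ext l; fin_cases l <;> rfl
  have e2 : (![0, 0, 1] : Fin 3 → K) = Pi.single 2 1 := by ext l; fin_cases l <;> rfl
  have d0 : ![0, k1, 1] = k1 • Pi.single 1 1 + Pi.single 2 1 := by ext l; fin_cases l <;> simp
  have d1 : ![1, 0, k2] = k2 • Pi.single 2 1 + Pi.single 0 1 := by ext l; fin_cases l <;> simp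
  have d2 : ![k3, 1, 0] = k3 • Pi.single 0 1 + Pi.single 1 1 := by ext l; fin_cases l <;> simp
  simp only [e0, e1, e2, d0, d1, d2] at hp1 hp2 hp3 ht1 ht2 ht3
  have hp : ∀ i, K ∙ Pi.single i 1 ∈ O := by
    intro i; fin_cases i <;> assumption
  obtain ⟨T, hTO, hT0, hTinj, hTcard⟩ := IsArc.exists_reps_off_triangle hOoval hOrk hOcard hp
  have h1 := IsArc.prod_secant_slopes_eq_neg_inv hOoval hTO hT0 hTinj hTcard
    (by decide) (by decide) (by decide) hk1 ht1
  have h2 := IsArc.prod_secant_slopes_eq_neg_inv hOoval hTO hT0 hTinj hTcard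
    (by decide) (by decide) (by decide) hk2 ht2
  have h3 := IsArc.prod_secant_slopes_eq_neg_inv hOoval hTO hT0 hTinj hTcard
    (by decide) (by decide) (by decide) hk3 ht3
  have hone : ∏ v ∈ T, v 1 / v 2 * (v 2 / v 0) * (v 0 / v 1) = 1 :=
    prod_eq_one fun v hv => by field_simp [hT0 v hv]
  rw [prod_mul_distrib, prod_mul_distrib, h1, h2, h3] at hone
  field_simp at hone
  linear_combination -hone

/-- Segre's Lemma of the Tangents (coordinate form): let q be odd, O an oval of
q + 1 points in PG(2, F_q) containing p1 = [1:0:0], p2 = [0:1:0], p3 = [0:0:1],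
with tangent lines x2 = k1·x3 at p1, x3 = k2·x1 at p2, x1 = k3·x2 at p3
(k1, k2, k3 nonzero). Then k1·k2·k3 = -1. -/
theorem segre_lemma_of_tangents (K : Type*) [Field K] [Fintype K]
    (hq : Odd (Fintype.card K))
    (O : Set (Submodule K (Fin 3 → K)))
    (hOrk : ∀ S ∈ O, Module.finrank K S = 1)
    (hOcard : O.ncard = Fintype.card K + 1)
    (hOoval : ∀ W : Submodule K (Fin 3 → K), Module.finrank K W = 2 →
      {S ∈ O | S ≤ W}.ncard ≤ 2)
    (hp1 : Submodule.span K {![1, 0, 0]} ∈ O)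
    (hp2 : Submodule.span K {![0, 1, 0]} ∈ O)
    (hp3 : Submodule.span K {![0, 0, 1]} ∈ O)
    (k1 k2 k3 : K) (hk1 : k1 ≠ 0) (hk2 : k2 ≠ 0) (hk3 : k3 ≠ 0)
    -- the line x2 = k1·x3 is tangent to O at p1:
    (ht1 : {S ∈ O | S ≤ Submodule.span K {![1, 0, 0], ![0, k1, 1]}} =
      {Submodule.span K {![1, 0, 0]}})
    -- the line x3 = k2·x1 is tangent to O at p2:
    (ht2 : {S ∈ O | S ≤ Submodule.span K {![0, 1, 0], ![1, 0, k2]}} =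
      {Submodule.span K {![0, 1, 0]}})
    -- the line x1 = k3·x2 is tangent to O at p3:
    (ht3 : {S ∈ O | S ≤ Submodule.span K {![0, 0, 1], ![k3, 1, 0]}} =
      {Submodule.span K {![0, 0, 1]}}) :
    k1 * k2 * k3 = -1 :=
  segre_lemma_of_tangents_general K O hOrk hOcard hOoval hp1 hp2 hp3 k1 k2 k3 hk1 hk2 hk3 ht1 ht2
    ht3
end
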